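/- Let (M,g) be a complete Riemannian manifold and let {p_j}_{j≥1} be a sequence of points tending to infinity (i.e., d(p_j, p_0) → ∞ for a fixed basepoint p_0). Then for any compact set K ⊂ M, there exist infinitely many pairs of indices i, j such that every minimizing geodesic connecting p_i and p_j is disjoint from K. More precisely, there is a subsequence {p_{j_k}} and an index k_0 such that for all k, l ≥ k_0, every minimizing geodesic from p_{j_k} to p_{j_l} avoids K. -/

import Mathlib

/-!
A complete Riemannian manifold is modelled by a proper metric space (Hopf–Rinow), and a minimizing
geodesic from `x` to `y` by a curve `γ : ℝ → M` with `γ 0 = x`, `γ (d(x,y)) = y` which is an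
isometric embedding of `[0, d(x,y)]`.

Proof idea: if a minimizing geodesic from `x` to `y` meets `K ⊆ B(x₀, R)`, the Gromov product
`(x|y)_{x₀}` is at most `R`. By Ramsey's theorem a subsequence is either pairwise good or pairwise
bad. In the bad case there are minimizing geodesics from a fixed `a = p_{j₀}` to all later points;
their points at a large distance `T` from `a` lie in the compact ball `B(a, T)`, so two of them are
close, which forces `(p_i|p_j)_a ≈ T` and contradicts
`(p_i|p_j)_a ≤ (p_i|p_j)_{x₀} + d(a, x₀)` once `T > R + d(a, x₀)`.
-/

open Metric Filter Set

/-- `γ` is a (unit-speed) minimizing geodesic from `x` to `y`. -/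
def IsMinGeodesic {M : Type*} [MetricSpace M] (x y : M) (γ : ℝ → M) : Prop :=
  γ 0 = x ∧ γ (dist x y) = y ∧
    ∀ s ∈ Set.Icc (0:ℝ) (dist x y), ∀ t ∈ Set.Icc (0:ℝ) (dist x y),
      dist (γ s) (γ t) = |s - t|

theorem exists_strictMono_forall_of_eventually_eventually {f : Filter ℕ} [f.NeBot]
    (hf : f ≤ atTop) {r : ℕ → ℕ → Prop} (h : ∀ᶠ m in f, ∀ᶠ n in f, r m n) :
    ∃ φ : ℕ → ℕ, StrictMono φ ∧ ∀ i j, i < j → r (φ i) (φ j) := by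
  obtain ⟨φ, -, hφ⟩ := exists_seq_of_forall_finset_exists (fun m => ∀ᶠ n in f, r m n)
    (fun m n => m < n ∧ r m n) fun s hs =>
      (h.and <| (eventually_all_finset s).2 fun m hm =>
        ((eventually_gt_atTop m).filter_mono hf).and (hs m hm)).exists
  exact ⟨φ, fun i j hij => (hφ i j hij).1, fun i j hij => (hφ i j hij).2⟩

/-- Infinite Ramsey theorem for pairs and two colours. -/
theorem exists_strictMono_forall_or_forall_not (r : ℕ → ℕ → Prop) :
    ∃ φ : ℕ → ℕ, StrictMono φ ∧
      ((∀ i j, i < j → r (φ i) (φ j)) ∨ ∀ i j, i < j → ¬ r (φ i) (φ j)) := by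
  have hU : ((hyperfilter ℕ : Ultrafilter ℕ) : Filter ℕ) ≤ atTop :=
    Nat.cofinite_eq_atTop ▸ hyperfilter_le_cofinite
  by_cases h : ∀ᶠ m in hyperfilter ℕ, ∀ᶠ n in hyperfilter ℕ, r m n
  · obtain ⟨φ, hφ, hr⟩ := exists_strictMono_forall_of_eventually_eventually hU h
    exact ⟨φ, hφ, .inl hr⟩
  · simp_rw [← Ultrafilter.eventually_not] at h
    obtain ⟨φ, hφ, hr⟩ := exists_strictMono_forall_of_eventually_eventually hU h
    exact ⟨φ, hφ, .inr hr⟩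

section Geodesics

variable {M : Type*} [MetricSpace M]

noncomputable def gromovProduct (o x y : M) : ℝ :=
  (dist o x + dist o y - dist x y) / 2

theorem gromovProduct_self (o x : M) : gromovProduct o x x = dist o x := by
  simp [gromovProduct]

theorem gromovProduct_le_add_dist (o o' x y : M) :
    gromovProduct o x y ≤ gromovProduct o' x y + dist o o' := by
  have hx := dist_triangle o o' x
  have hy := dist_triangle o o' y
  simp only [gromovProduct]
  linarith

namespace IsMinGeodesic

variable {x y : M} {γ : ℝ → M} {s : ℝ}

theorem dist_left (hγ : IsMinGeodesic x y γ) (hs : s ∈ Icc 0 (dist x y)) :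
    dist x (γ s) = s := by
  rw [← hγ.1, hγ.2.2 0 ⟨le_rfl, dist_nonneg⟩ s hs, zero_sub, abs_neg, abs_of_nonneg hs.1]

theorem dist_right (hγ : IsMinGeodesic x y γ) (hs : s ∈ Icc 0 (dist x y)) :
    dist (γ s) y = dist x y - s := by
  conv_lhs => rw [← hγ.2.1]
  rw [hγ.2.2 s hs _ ⟨dist_nonneg, le_rfl⟩, abs_of_nonpos (by linarith [hs.2])]
  ring

theorem symm (hγ : IsMinGeodesic x y γ) :
    IsMinGeodesic y x (fun t => γ (dist x y - t)) := by
  have reflect : ∀ t ∈ Icc 0 (dist y x), dist x y - t ∈ Icc 0 (dist x y) := fun t ht => by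
    rw [dist_comm] at ht
    exact ⟨by linarith [ht.2], by linarith [ht.1]⟩
  refine ⟨by simpa using hγ.2.1, by simpa [dist_comm y x] using hγ.1, fun s hs t ht => ?_⟩
  rw [hγ.2.2 _ (reflect s hs) _ (reflect t ht), abs_sub_comm]
  ring_nf

theorem gromovProduct_le_dist (hγ : IsMinGeodesic x y γ) (hs : s ∈ Icc 0 (dist x y)) (o : M) :
    gromovProduct o x y ≤ dist o (γ s) := by
  have hx := dist_triangle o (γ s) x
  have hy := dist_triangle o (γ s) y
  rw [dist_comm (γ s) x, hγ.dist_left hs] at hx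
  rw [hγ.dist_right hs] at hy
  simp only [gromovProduct]
  linarith

end IsMinGeodesic

def MinGeodesicsAvoid (K : Set M) (x y : M) : Prop :=
  ∀ γ : ℝ → M, IsMinGeodesic x y γ → ∀ s ∈ Icc (0:ℝ) (dist x y), γ s ∉ K

theorem MinGeodesicsAvoid.symm {K : Set M} {x y : M} (h : MinGeodesicsAvoid K x y) :
    MinGeodesicsAvoid K y x := fun γ hγ s hs hsK => by
  rw [dist_comm] at hs
  refine h _ hγ.symm (dist x y - s) ⟨by linarith [hs.2], by linarith [hs.1]⟩ ?_
  simpa [dist_comm y x] using hsK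

theorem minGeodesicsAvoid_of_lt_gromovProduct {K : Set M} {o : M} {R : ℝ}
    (hK : K ⊆ closedBall o R) {x y : M} (h : R < gromovProduct o x y) :
    MinGeodesicsAvoid K x y := fun γ hγ s hs hsK => by
  have := hK hsK
  rw [mem_closedBall, dist_comm] at this
  linarith [hγ.gromovProduct_le_dist hs o]

/-- The points `γ n T` lie in the compact ball `closedBall a T`, so two of them are close. -/
theorem exists_lt_gromovProduct_of_isMinGeodesic [ProperSpace M] {a : M} {q : ℕ → M}
    {γ : ℕ → ℝ → M} (hγ : ∀ n, IsMinGeodesic a (q n) (γ n)) {T : ℝ} (hT₀ : 0 ≤ T)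
    (hT : ∀ n, T ≤ dist a (q n)) {ε : ℝ} (hε : 0 < ε) :
    ∃ i j, i < j ∧ T - ε < gromovProduct a (q i) (q j) := by
  have hTmem : ∀ n, T ∈ Icc 0 (dist a (q n)) := fun n => ⟨hT₀, hT n⟩
  have hball : ∀ n, γ n T ∈ closedBall a T := fun n => by
    rw [mem_closedBall, dist_comm, (hγ n).dist_left (hTmem n)]
  obtain ⟨z, -, ψ, hψ, hlim⟩ := (isCompact_closedBall a T).tendsto_subseq hball
  obtain ⟨N, hN⟩ := Metric.cauchySeq_iff'.1 hlim.cauchySeq (2 * ε) (by positivity)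
  refine ⟨ψ N, ψ (N + 1), hψ N.lt_succ_self, ?_⟩
  have hclose := hN (N + 1) N.le_succ
  have hpath := dist_triangle4 (q (ψ N)) (γ (ψ N) T) (γ (ψ (N + 1)) T) (q (ψ (N + 1)))
  rw [dist_comm (q (ψ N)) (γ (ψ N) T)] at hpath
  simp only [Function.comp_apply] at hclose
  simp only [gromovProduct]
  linarith [(hγ (ψ N)).dist_right (hTmem _), (hγ (ψ (N + 1))).dist_right (hTmem _),
    dist_comm (γ (ψ N) T) (γ (ψ (N + 1)) T)]

theorem not_forall_not_minGeodesicsAvoid [ProperSpace M] {K : Set M} (hK : Bornology.IsBounded K)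
    {x₀ : M} {q : ℕ → M} (hq : Tendsto (fun n => dist x₀ (q n)) atTop atTop) :
    ¬ ∀ i j, i < j → ¬ MinGeodesicsAvoid K (q i) (q j) := by
  intro hbad
  obtain ⟨R, hR, hRK⟩ := hK.subset_closedBall_lt 0 x₀
  set a := q 0
  set T := R + dist a x₀ + 1
  obtain ⟨N, hN⟩ := (hq.eventually_ge_atTop (T + dist a x₀)).exists_forall_of_atTop
  have hfar : ∀ k, T ≤ dist a (q (N + 1 + k)) := fun k => by
    linarith [hN (N + 1 + k) (by omega), dist_triangle x₀ a (q (N + 1 + k)), dist_comm a x₀]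
  have hgeod : ∀ k, ∃ γ, IsMinGeodesic a (q (N + 1 + k)) γ := fun k => by
    by_contra! hnone
    exact hbad 0 (N + 1 + k) (by omega) fun γ hγ => (hnone γ hγ).elim
  choose γ hγ using hgeod
  obtain ⟨i, j, hij, hT⟩ :=
    exists_lt_gromovProduct_of_isMinGeodesic hγ (by positivity) hfar one_pos
  have hx₀ : gromovProduct x₀ (q (N + 1 + i)) (q (N + 1 + j)) ≤ R :=
    not_lt.1 fun h => hbad _ _ (by omega) (minGeodesicsAvoid_of_lt_gromovProduct hRK h)
  linarith [gromovProduct_le_add_dist a x₀ (q (N + 1 + i)) (q (N + 1 + j))]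

end Geodesics

/-- Let `(M,g)` be a complete Riemannian manifold and let
`p_j` be a sequence of points tending to infinity (`d(p_j, x₀) → ∞` for a
fixed basepoint `x₀`).  Then for any compact set `K ⊆ M` there are infinitely
many pairs of indices `i, j` such that every minimizing geodesic connecting
`p_i` and `p_j` is disjoint from `K`: there are a subsequence `p ∘ φ` and an
index `k₀` such that for all `k, l ≥ k₀`, every minimizing geodesic from
`p (φ k)` to `p (φ l)` avoids `K`. -/
theorem minimal_geodesics_avoid_compact {M : Type*} [MetricSpace M]
    [ProperSpace M] (p : ℕ → M) (x₀ : M)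
    (hp : Tendsto (fun j => dist x₀ (p j)) atTop atTop)
    (K : Set M) (hK : IsCompact K) :
    ∃ φ : ℕ → ℕ, StrictMono φ ∧ ∃ k₀ : ℕ, ∀ k ≥ k₀, ∀ l ≥ k₀,
      ∀ γ : ℝ → M, IsMinGeodesic (p (φ k)) (p (φ l)) γ →
        ∀ s ∈ Set.Icc (0:ℝ) (dist (p (φ k)) (p (φ l))), γ s ∉ K := by
  obtain ⟨φ, hφ, hgood | hbad⟩ :=
    exists_strictMono_forall_or_forall_not fun i j => MinGeodesicsAvoid K (p i) (p j)
  · obtain ⟨R, hRK⟩ := hK.isBounded.subset_closedBall x₀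
    obtain ⟨k₀, hk₀⟩ :=
      ((hp.comp hφ.tendsto_atTop).eventually_gt_atTop R).exists_forall_of_atTop
    refine ⟨φ, hφ, k₀, fun k hk l _ => ?_⟩
    rcases lt_trichotomy k l with hkl | rfl | hlk
    · exact hgood k l hkl
    · exact minGeodesicsAvoid_of_lt_gromovProduct hRK <|
        (gromovProduct_self x₀ _).symm ▸ hk₀ k hk
    · exact (hgood l k hlk).symm
  · exact absurd hbad (not_forall_not_minGeodesicsAvoid hK.isBounded (hp.comp hφ.tendsto_atTop))
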